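/- arXiv:math/0411341 — 2 statements merged into one kernel-verified Lean document; each statement's English description precedes it below -/
import Mathlib

section
/- For every finite simple graph Γ, the number of chordless cycles of Γ is at least |Edg(Γ)| − |Ver(Γ)| + |Con(Γ)|. -/
/-- `z : ZMod p → V` is a labeling of a chordless cycle of the simple graph `G`:
`p ≥ 3` distinct vertices whose induced edges are exactly the consecutive pairs. -/
def IsChordlessCycleLabeling {V : Type*} (G : SimpleGraph V) (p : ℕ) (z : ZMod p → V) : Prop :=
  3 ≤ p ∧ Function.Injective z ∧
    ∀ i j : ZMod p, i ≠ j → (G.Adj (z i) (z j) ↔ (j = i + 1 ∨ i = j + 1))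

/-- The set of chordless cycles of `G`, each recorded as its set of vertices. -/
def chordlessCycles {V : Type*} (G : SimpleGraph V) : Set (Set V) :=
  {S | ∃ (p : ℕ) (z : ZMod p → V), IsChordlessCycleLabeling G p z ∧ Set.range z = S}

/-- `o` is an orientation of `G`: only edges get directed, and each edge gets exactly one
of its two directions. -/
def IsOrientation {V : Type*} (G : SimpleGraph V) (o : V → V → Prop) : Prop :=
  (∀ u v, o u v → G.Adj u v) ∧ (∀ u v, G.Adj u v → (o u v ↔ ¬ o v u))

/-- `G` is cyclically orientable: it admits an orientation in which every chordless cycle is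
cyclically oriented. -/
def CyclicallyOrientable {V : Type*} (G : SimpleGraph V) : Prop :=
  ∃ o : V → V → Prop, IsOrientation G o ∧
    ∀ S ∈ chordlessCycles G, ∃ (p : ℕ) (z : ZMod p → V),
      IsChordlessCycleLabeling G p z ∧ Set.range z = S ∧ ∀ i : ZMod p, o (z i) (z (i + 1))


open Finset Module
set_option linter.unusedSectionVars false
open scoped Classical
section Aux
variable {V : Type*} [Fintype V] [DecidableEq V] (G : SimpleGraph V) [DecidableRel G.Adj]

noncomputable def bd : (G.edgeSet → ZMod 2) →ₗ[ZMod 2] (V → ZMod 2) where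
  toFun f := fun v => ∑ e : G.edgeSet, f e * (if v ∈ (e : Sym2 V) then 1 else 0)
  map_add' f g := by
    funext v
    rw [Pi.add_apply, ← Finset.sum_add_distrib]
    exact Finset.sum_congr rfl (by intros; split <;> simp)
  map_smul' c f := by
    funext v
    rw [RingHom.id_apply, Pi.smul_apply, smul_eq_mul, Finset.mul_sum]
    exact Finset.sum_congr rfl (by intros; split <;> simp [mul_assoc])

lemma bd_apply (f : G.edgeSet → ZMod 2) (v : V) :
    bd G f v = ∑ e : G.edgeSet, f e * (if v ∈ (e : Sym2 V) then 1 else 0) := rfl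

lemma bd_single (e0 : G.edgeSet) :
    bd G (Pi.single e0 1) = fun v => if v ∈ (e0 : Sym2 V) then 1 else 0 := by
  funext v
  rw [bd_apply, Finset.sum_eq_single e0]
  · simp
  · intro e _ he; simp [Pi.single_eq_of_ne he]
  · simp

lemma single_adj_mem_range {u w : V} (h : G.Adj u w) :
    (Pi.single u 1 + Pi.single w 1 : V → ZMod 2) ∈ LinearMap.range (bd G) := by
  refine ⟨Pi.single ⟨s(u,w), h⟩ 1, ?_⟩
  rw [bd_single]
  funext v
  have hne : u ≠ w := h.ne
  by_cases hu : v = u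
  · subst hu; simp [Pi.single_eq_of_ne hne, Sym2.mem_iff]
  · by_cases hw : v = w
    · subst hw; simp [Pi.single_eq_of_ne (Ne.symm hne), Sym2.mem_iff, hu]
    · simp [Sym2.mem_iff, hu, hw, Pi.single_eq_of_ne hu, Pi.single_eq_of_ne hw]

lemma single_single_mem_range {u w : V} (h : G.Reachable u w) :
    (Pi.single u 1 + Pi.single w 1 : V → ZMod 2) ∈ LinearMap.range (bd G) := by
  have h2 : ∀ a : ZMod 2, a + a = 0 := by decide
  have hz : ∀ x : V, (Pi.single x 1 + Pi.single x 1 : V → ZMod 2) = 0 :=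
    fun x => funext fun v => h2 _
  obtain ⟨p⟩ := h
  induction p with
  | nil => rw [hz]; exact Submodule.zero_mem _
  | @cons a b c hadj p ih =>
    have key : (Pi.single a 1 + Pi.single c 1 : V → ZMod 2)
        = (Pi.single a 1 + Pi.single b 1) + (Pi.single b 1 + Pi.single c 1) := by
      funext v
      simp only [Pi.add_apply]
      rw [show (Pi.single a 1 : V → ZMod 2) v + (Pi.single b 1 : V → ZMod 2) v +
        ((Pi.single b 1 : V → ZMod 2) v + (Pi.single c 1 : V → ZMod 2) v)
        = (Pi.single a 1 : V → ZMod 2) v + (((Pi.single b 1 : V → ZMod 2) v +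
          (Pi.single b 1 : V → ZMod 2) v) + (Pi.single c 1 : V → ZMod 2) v) by ring,
        h2, zero_add]
    rw [key]
    exact Submodule.add_mem _ (single_adj_mem_range G hadj) ih
noncomputable def qmap : (V → ZMod 2) →ₗ[ZMod 2] (G.ConnectedComponent → ZMod 2) where
  toFun f := fun c => ∑ v : V, f v * (if G.connectedComponentMk v = c then 1 else 0)
  map_add' f g := by
    funext c
    rw [Pi.add_apply, ← Finset.sum_add_distrib]
    exact Finset.sum_congr rfl (by intros; split <;> simp)
  map_smul' c f := by
    funext c
    rw [RingHom.id_apply, Pi.smul_apply, smul_eq_mul, Finset.mul_sum]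
    exact Finset.sum_congr rfl (by intros; split <;> simp [mul_assoc])

lemma qmap_surj : Function.Surjective (qmap G) := by
  intro g
  refine ⟨fun v => if (G.connectedComponentMk v).out = v then g (G.connectedComponentMk v) else 0, ?_⟩
  funext c
  show ∑ v : V, _ = g c
  rw [Finset.sum_eq_single c.out]
  · have h1 : G.connectedComponentMk c.out = c := c.out_eq
    simp [h1]
  · intro v _ hv
    by_cases h : (G.connectedComponentMk v).out = v
    · by_cases h2 : G.connectedComponentMk v = c
      · exfalso; apply hv; rw [← h, h2]
      · simp [h2]
    · simp [h]
  · simp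


lemma qmap_bd (f : G.edgeSet → ZMod 2) : qmap G (bd G f) = 0 := by
  funext c
  show ∑ v : V, (∑ e : G.edgeSet, f e * (if v ∈ (e : Sym2 V) then 1 else 0)) *
      (if G.connectedComponentMk v = c then 1 else 0) = 0
  simp_rw [Finset.sum_mul]
  rw [Finset.sum_comm]
  apply Finset.sum_eq_zero
  rintro ⟨e, he⟩ -
  induction e with
  | h a b =>
    have hab : G.Adj a b := he
    have hne : a ≠ b := hab.ne
    have hreach : G.connectedComponentMk a = G.connectedComponentMk b :=
      SimpleGraph.ConnectedComponent.eq.2 hab.reachable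
    have : ∀ v : V,
        f ⟨s(a,b), he⟩ * (if v ∈ (s(a,b) : Sym2 V) then 1 else 0) *
          (if G.connectedComponentMk v = c then 1 else 0)
        = if v ∈ ({a, b} : Finset V) then
            f ⟨s(a,b), he⟩ * (if G.connectedComponentMk v = c then 1 else 0) else 0 := by
      intro v
      by_cases hv : v ∈ (s(a,b) : Sym2 V)
      · have : v ∈ ({a, b} : Finset V) := by
          rcases Sym2.mem_iff.1 hv with h | h <;> simp [h]
        simp [hv, this]
      · have : v ∉ ({a, b} : Finset V) := by
          intro h; apply hv; rcases Finset.mem_insert.1 h with h | h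
          · simp [h]
          · simp [Finset.mem_singleton.1 h]
        simp [hv, this]
    calc ∑ v : V, f ⟨s(a,b), he⟩ * (if v ∈ (s(a,b):Sym2 V) then 1 else 0) *
          (if G.connectedComponentMk v = c then 1 else 0)
        = ∑ v ∈ ({a,b} : Finset V),
            f ⟨s(a,b), he⟩ * (if G.connectedComponentMk v = c then 1 else 0) := by
          rw [Finset.sum_congr rfl fun v _ => this v, Finset.sum_ite_mem,
            Finset.univ_inter]
      _ = 0 := by
          rw [Finset.sum_pair hne, hreach, ← mul_add]
          have : ((if G.connectedComponentMk b = c then (1:ZMod 2) else 0) +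
              (if G.connectedComponentMk b = c then 1 else 0)) = 0 := by
            split <;> decide
          rw [this, mul_zero]

lemma zmod2_ne_zero : ∀ a : ZMod 2, a ≠ 0 → a = 1 := by decide

lemma ker_qmap_le_range_bd : LinearMap.ker (qmap G) ≤ LinearMap.range (bd G) := by
  suffices h : ∀ (n : ℕ) (f : V → ZMod 2), f ∈ LinearMap.ker (qmap G) →
      (Finset.univ.filter (fun v => f v ≠ 0)).card = n → f ∈ LinearMap.range (bd G) by
    intro f hf
    exact h _ f hf rfl
  intro n
  induction n using Nat.strong_induction_on with
  | _ n ih =>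
    intro f hf hn
    by_cases h0 : f = 0
    · exact h0 ▸ Submodule.zero_mem _
    · obtain ⟨u, hu⟩ : ∃ u, f u ≠ 0 := by
        by_contra h; push_neg at h; exact h0 (funext fun v => by simpa using h v)
      have hq : qmap G f (G.connectedComponentMk u) = 0 := by
        rw [LinearMap.mem_ker.1 hf]; rfl
      obtain ⟨w, hwu, hwc, hw⟩ : ∃ w, w ≠ u ∧
          G.connectedComponentMk w = G.connectedComponentMk u ∧ f w ≠ 0 := by
        by_contra hcon
        push_neg at hcon
        have : qmap G f (G.connectedComponentMk u) = f u := by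
          show ∑ v : V, f v * _ = f u
          rw [Finset.sum_eq_single u]
          · simp
          · intro v _ hvu
            by_cases hc : G.connectedComponentMk v = G.connectedComponentMk u
            · rw [hcon v hvu hc, zero_mul]
            · simp [hc]
          · simp
        exact hu (this ▸ hq)
      have hreach : G.Reachable u w :=
        (SimpleGraph.ConnectedComponent.eq.1 hwc).symm
      set g : V → ZMod 2 := Pi.single u 1 + Pi.single w 1 with hg
      have hgr : g ∈ LinearMap.range (bd G) := single_single_mem_range G hreach
      have hgk : g ∈ LinearMap.ker (qmap G) := by
        obtain ⟨x, hx⟩ := hgr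
        rw [← hx]; exact LinearMap.mem_ker.2 (qmap_bd G x)
      have hfk' : f + g ∈ LinearMap.ker (qmap G) := Submodule.add_mem _ hf hgk
      have hsub : (Finset.univ.filter (fun v => (f + g) v ≠ 0)) ⊆
          (Finset.univ.filter (fun v => f v ≠ 0)).erase u := by
        intro v hv
        rw [Finset.mem_filter] at hv
        rcases hv with ⟨-, hv⟩
        by_cases hvu : v = u
        · exfalso; apply hv; subst hvu
          rw [Pi.add_apply, hg, Pi.add_apply, Pi.single_eq_same,
            Pi.single_eq_of_ne (Ne.symm hwu), zmod2_ne_zero _ hu]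
          decide
        · rw [Finset.mem_erase, Finset.mem_filter]
          refine ⟨hvu, Finset.mem_univ v, ?_⟩
          by_cases hvw : v = w
          · subst hvw; exact hw
          · intro hfv; apply hv
            rw [Pi.add_apply, hg, Pi.add_apply, Pi.single_eq_of_ne hvu,
              Pi.single_eq_of_ne hvw, hfv]
            decide
      have hcard : (Finset.univ.filter (fun v => (f + g) v ≠ 0)).card < n := by
        calc (Finset.univ.filter (fun v => (f + g) v ≠ 0)).card
            ≤ ((Finset.univ.filter (fun v => f v ≠ 0)).erase u).card :=
              Finset.card_le_card hsub
          _ < (Finset.univ.filter (fun v => f v ≠ 0)).card := by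
              apply Finset.card_erase_lt_of_mem
              rw [Finset.mem_filter]; exact ⟨Finset.mem_univ u, hu⟩
          _ = n := hn
      have hmem : f + g ∈ LinearMap.range (bd G) := ih _ hcard (f + g) hfk' rfl
      have : f = (f + g) + g := by
        funext v
        rw [Pi.add_apply, Pi.add_apply]
        rcases (by decide : ∀ a b : ZMod 2, a = a + b + b) with _
        exact (by decide : ∀ a b : ZMod 2, a = a + b + b) _ _
      rw [this]
      exact Submodule.add_mem _ hmem hgr

lemma range_bd_eq_ker_qmap : LinearMap.range (bd G) = LinearMap.ker (qmap G) := by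
  refine le_antisymm ?_ (ker_qmap_le_range_bd G)
  rintro f ⟨x, rfl⟩
  exact LinearMap.mem_ker.2 (qmap_bd G x)

lemma finrank_ker_bd :
    finrank (ZMod 2) (LinearMap.ker (bd G)) + Fintype.card V
      = G.edgeFinset.card + Nat.card G.ConnectedComponent := by
  letI : Fintype G.ConnectedComponent := Fintype.ofFinite _
  have h1 : finrank (ZMod 2) (LinearMap.range (bd G)) +
      finrank (ZMod 2) (LinearMap.ker (bd G)) = G.edgeFinset.card := by
    rw [LinearMap.finrank_range_add_finrank_ker,
      Module.finrank_fintype_fun_eq_card, SimpleGraph.edgeFinset_card]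
  have h2 : finrank (ZMod 2) (LinearMap.range (qmap G)) +
      finrank (ZMod 2) (LinearMap.ker (qmap G)) = Fintype.card V := by
    rw [LinearMap.finrank_range_add_finrank_ker, Module.finrank_fintype_fun_eq_card]
  have h3 : finrank (ZMod 2) (LinearMap.range (qmap G)) = Nat.card G.ConnectedComponent := by
    rw [LinearMap.range_eq_top.2 (qmap_surj G), finrank_top,
      Module.finrank_fintype_fun_eq_card, Nat.card_eq_fintype_card]
  have h4 : finrank (ZMod 2) (LinearMap.range (bd G)) =
      finrank (ZMod 2) (LinearMap.ker (qmap G)) := by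
    rw [range_bd_eq_ker_qmap]
  omega

end Aux



section Cyc
variable {V : Type*} [Fintype V] [DecidableEq V] (G : SimpleGraph V) [DecidableRel G.Adj]

/-- a (not necessarily chordless) cycle labeling -/
def IsCyc (p : ℕ) (z : ZMod p → V) : Prop :=
  3 ≤ p ∧ Function.Injective z ∧ ∀ i : ZMod p, G.Adj (z i) (z (i+1))

lemma two_ne_zero_zmod {p : ℕ} (hp : 3 ≤ p) : (2 : ZMod p) ≠ 0 := by
  intro h
  have : (p : ℕ) ∣ 2 := by
    have := (ZMod.natCast_eq_zero_iff 2 p).1 (by exact_mod_cast h)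
    exact this
  have := Nat.le_of_dvd (by norm_num) this
  omega

lemma cycEdge_inj {p : ℕ} {z : ZMod p → V} (h : IsCyc G p z) {i j : ZMod p}
    (hne : i ≠ j) : s(z i, z (i+1)) ≠ s(z j, z (j+1)) := by
  obtain ⟨hp, hinj, hadj⟩ := h
  intro he
  rcases Sym2.eq_iff.1 he with ⟨h1, h2⟩ | ⟨h1, h2⟩
  · exact hne (hinj h1)
  · have e1 : i = j + 1 := hinj h1
    have e2 : i + 1 = j := hinj h2
    have : i = i + 2 := by
      calc i = j + 1 := e1
        _ = (i + 1) + 1 := by rw [e2]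
        _ = i + 2 := by ring
    have h2 : (2 : ZMod p) = 0 := by
      have := congrArg (· - i) this
      simpa using this.symm
    exact two_ne_zero_zmod hp h2
end Cyc
section Cyc2
variable {V : Type*} [Fintype V] [DecidableEq V] (G : SimpleGraph V) [DecidableRel G.Adj]

open scoped Classical in
/-- the edge-indicator vector of a cycle labeling -/
noncomputable def cycVec (p : ℕ) (z : ZMod p → V) : G.edgeSet → ZMod 2 :=
  fun e => if ∃ i : ZMod p, (e : Sym2 V) = s(z i, z (i+1)) then 1 else 0

def cycEdge {p : ℕ} {z : ZMod p → V} (h : IsCyc G p z) (i : ZMod p) : G.edgeSet :=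
  ⟨s(z i, z (i+1)), h.2.2 i⟩

lemma cycEdge_injective {p : ℕ} {z : ZMod p → V} (h : IsCyc G p z) :
    Function.Injective (cycEdge G h) := by
  intro i j hij
  by_contra hne
  exact cycEdge_inj G h hne (congrArg Subtype.val hij)

lemma cycVec_eq_sum {p : ℕ} [NeZero p] {z : ZMod p → V} (h : IsCyc G p z) :
    cycVec G p z = ∑ i : ZMod p, Pi.single (cycEdge G h i) 1 := by
  classical
  funext e
  rw [Finset.sum_apply]
  simp_rw [Pi.single_apply]
  unfold cycVec
  split
  · next hex =>
    obtain ⟨i0, hi0⟩ := hex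
    symm
    rw [Finset.sum_eq_single i0]
    · rw [if_pos (Subtype.ext hi0)]
    · intro j _ hj
      rw [if_neg]
      intro hej
      have : cycEdge G h i0 = cycEdge G h j := by
        apply Subtype.ext
        change s(z i0, z (i0+1)) = s(z j, z (j+1))
        rw [← hi0]; exact congrArg Subtype.val hej
      exact hj (cycEdge_injective G h this).symm
    · simp
  · next hex =>
    push_neg at hex
    symm
    apply Finset.sum_eq_zero
    intro i _
    rw [if_neg]
    intro hei
    exact hex i (congrArg Subtype.val hei)

lemma cycVec_mem_ker {p : ℕ} [NeZero p] {z : ZMod p → V} (h : IsCyc G p z) :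
    cycVec G p z ∈ LinearMap.ker (bd G) := by
  classical
  rw [LinearMap.mem_ker, cycVec_eq_sum G h, map_sum]
  funext v
  rw [Finset.sum_apply, Pi.zero_apply]
  have step : ∀ i : ZMod p, bd G (Pi.single (cycEdge G h i) 1) v
      = (if v = z i then (1:ZMod 2) else 0) + (if v = z (i+1) then 1 else 0) := by
    intro i
    rw [bd_single]
    have hne : z i ≠ z (i+1) := (h.2.2 i).ne
    by_cases h1 : v = z i
    · subst h1; simp [cycEdge, Sym2.mem_iff, hne]
    · by_cases h2 : v = z (i+1)
      · subst h2; simp [cycEdge, Sym2.mem_iff, h1, Ne.symm hne]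
      · simp [cycEdge, Sym2.mem_iff, h1, h2]
  rw [Finset.sum_congr rfl fun i _ => step i, Finset.sum_add_distrib]
  have reidx : ∑ i : ZMod p, (if v = z (i+1) then (1:ZMod 2) else 0)
      = ∑ i : ZMod p, (if v = z i then (1:ZMod 2) else 0) :=
    Fintype.sum_equiv (Equiv.addRight 1) _ _ (fun i => rfl)
  rw [reidx]
  exact (by decide : ∀ a : ZMod 2, a + a = 0) _
end Cyc2
section FindCyc
variable {V : Type*} [Fintype V] [DecidableEq V] (G : SimpleGraph V) [DecidableRel G.Adj]

lemma val_add_one {p : ℕ} [NeZero p] (hp : 2 ≤ p) (i : ZMod p) :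
    (i + 1).val = (i.val + 1) % p := by
  haveI : Fact (1 < p) := ⟨by omega⟩
  rw [ZMod.val_add, ZMod.val_one]

lemma exists_cyc_in_supp {f : G.edgeSet → ZMod 2} (hf : f ∈ LinearMap.ker (bd G))
    (h0 : f ≠ 0) :
    ∃ (p : ℕ) (_ : NeZero p) (z : ZMod p → V), IsCyc G p z ∧
      ∀ (i : ZMod p) (h : G.Adj (z i) (z (i+1))), f ⟨s(z i, z (i+1)), h⟩ ≠ 0 := by
  classical
  set H : V → V → Prop := fun a b => ∃ h : G.Adj a b, f ⟨s(a,b), h⟩ ≠ 0 with hH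
  have Hsymm : ∀ {a b}, H a b → H b a := by
    rintro a b ⟨h, hne⟩
    refine ⟨h.symm, ?_⟩
    have : (⟨s(b,a), h.symm⟩ : G.edgeSet) = ⟨s(a,b), h⟩ := Subtype.ext Sym2.eq_swap
    rw [this]; exact hne
  have Hirr : ∀ a, ¬ H a a := by rintro a ⟨h, -⟩; exact G.irrefl h
  have Hadj : ∀ {a b}, H a b → G.Adj a b := fun h => h.1
  have prop : ∀ v u, H v u → ∃ u', H v u' ∧ u' ≠ u := by
    intro v u hvu
    by_contra hcon
    push_neg at hcon
    obtain ⟨hadj, hne⟩ := hvu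
    have hbd : bd G f v = 0 := by rw [LinearMap.mem_ker.1 hf]; rfl
    rw [bd_apply, Finset.sum_eq_single (⟨s(v,u), hadj⟩ : G.edgeSet)] at hbd
    · simp only [Sym2.mem_iff, true_or, if_pos, mul_one] at hbd
      exact hne hbd
    · rintro ⟨e, he⟩ - hee
      by_cases hv : v ∈ e
      · rcases Sym2.mem_iff_exists.1 hv with ⟨u', rfl⟩
        have hadj' : G.Adj v u' := he
        by_cases hfz : f ⟨s(v,u'), he⟩ = 0
        · rw [hfz, zero_mul]
        · exfalso
          have : u' = u := hcon u' ⟨hadj', hfz⟩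
          exact hee (Subtype.ext (show s(v,u') = s(v,u) by rw [this]))
      · simp [hv]
    · simp
  obtain ⟨e0, hfe0⟩ : ∃ e0 : G.edgeSet, f e0 ≠ 0 := by
    by_contra hc; push_neg at hc; exact h0 (funext fun e => by simpa using hc e)
  obtain ⟨e0s, he0m⟩ := e0
  induction e0s with
  | h u0 v0 =>
  have h00 : H u0 v0 := ⟨he0m, hfe0⟩
  -- choice of next step
  choose next hnext1 hnext2 using fun (a b : V) (h : H a b) => prop b a (Hsymm h)
  -- non-backtracking walk
  let F : ℕ → {q : V × V // H q.1 q.2} := fun n => Nat.rec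
    ⟨(u0, v0), h00⟩ (fun _ q => ⟨(q.1.2, next q.1.1 q.1.2 q.2), hnext1 _ _ q.2⟩) n
  let g : ℕ → V := fun n => (F n).1.1
  have hg1 : ∀ n, g (n+1) = (F n).1.2 := fun n => rfl
  have hstep : ∀ n, H (g n) (g (n+1)) := fun n => (F n).2
  have hnb : ∀ n, g (n+2) ≠ g n := by
    intro n
    have : g (n+2) = next (F n).1.1 (F n).1.2 (F n).2 := rfl
    rw [this]
    exact hnext2 _ _ (F n).2
  -- first repetition
  obtain ⟨a, b, hab, hgab⟩ := Finite.exists_ne_map_eq_of_infinite g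
  have hrep : ∃ m, ∃ n, n < m ∧ g n = g m := by
    rcases lt_or_gt_of_ne hab with h | h
    · exact ⟨b, a, h, hgab⟩
    · exact ⟨a, b, h, hgab.symm⟩
  let m0 := Nat.find hrep
  obtain ⟨n0, hn0m, hgn0⟩ : ∃ n, n < m0 ∧ g n = g m0 := Nat.find_spec hrep
  have hmin : ∀ m' < m0, ¬ ∃ n, n < m' ∧ g n = g m' := fun m' hm' => Nat.find_min hrep hm'
  set p := m0 - n0 with hp
  have hp1 : 1 ≤ p := by omega
  have hp3 : 3 ≤ p := by
    rcases Nat.lt_or_ge p 3 with h | h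
    · interval_cases p
      · -- p = 1 : g m0 = g (m0 - 1), H (g n0) (g (n0+1)) with n0+1 = m0
        exfalso
        have : n0 + 1 = m0 := by omega
        have h1 := hstep n0
        rw [this, ← hgn0] at h1
        exact Hirr _ h1
      · -- p = 2
        exfalso
        have : n0 + 2 = m0 := by omega
        exact hnb n0 (by rw [this, hgn0])
    · exact h
  haveI : NeZero p := ⟨by omega⟩
  set z : ZMod p → V := fun i => g (n0 + i.val) with hz
  have hinj : Function.Injective z := by
    intro i j hij
    by_contra hne
    have hiv : i.val < p := i.val_lt
    have hjv : j.val < p := j.val_lt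
    have hvne : i.val ≠ j.val := fun h => hne (ZMod.val_injective _ h)
    -- wlog i.val < j.val
    have key : ∀ a b : ℕ, a < b → b < p → g (n0 + a) = g (n0 + b) → False := by
      intro a b hab hbp hgab2
      apply hmin (n0 + b) (by omega)
      exact ⟨n0 + a, by omega, hgab2⟩
    rcases Nat.lt_or_ge i.val j.val with h | h
    · exact key _ _ h hjv hij
    · exact key _ _ (by omega) hiv hij.symm
  have hadjz : ∀ i : ZMod p, H (z i) (z (i+1)) := by
    intro i
    have hiv : i.val < p := i.val_lt
    rw [hz]
    simp only
    rw [val_add_one (by omega) i]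
    rcases Nat.lt_or_ge (i.val + 1) p with h | h
    · rw [Nat.mod_eq_of_lt h]
      exact hstep _
    · have hival : i.val = p - 1 := by omega
      have hmod : (i.val + 1) % p = 0 := by
        rw [hival, Nat.sub_add_cancel (by omega), Nat.mod_self]
      rw [hmod, Nat.add_zero, hgn0]
      have : n0 + i.val + 1 = m0 := by omega
      rw [show n0 + i.val = m0 - 1 by omega] at *
      have := hstep (m0 - 1)
      rw [show m0 - 1 + 1 = m0 by omega] at this
      exact this
  refine ⟨p, inferInstance, z, ⟨hp3, hinj, fun i => Hadj (hadjz i)⟩, ?_⟩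
  intro i hadj
  obtain ⟨h', hne'⟩ := hadjz i
  have : (⟨s(z i, z (i+1)), hadj⟩ : G.edgeSet) = ⟨s(z i, z (i+1)), h'⟩ := rfl
  rw [this]; exact hne'
end FindCyc
section Span
variable {V : Type*} [Fintype V] [DecidableEq V] (G : SimpleGraph V) [DecidableRel G.Adj]

open scoped Classical in
noncomputable def chordVec (S : Set V) : G.edgeSet → ZMod 2 :=
  fun e => if ∀ x ∈ (e : Sym2 V), x ∈ S then 1 else 0

noncomputable def Tset : Set (G.edgeSet → ZMod 2) := chordVec G '' chordlessCycles G

lemma cycVec_rotate {p : ℕ} [NeZero p] (z : ZMod p → V) (k : ZMod p) :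
    cycVec G p (fun m => z (m + k)) = cycVec G p z := by
  classical
  funext e
  unfold cycVec
  congr 1
  simp only [eq_iff_iff]
  constructor
  · rintro ⟨m, hm⟩
    exact ⟨m + k, by rw [hm]; congr 1; ring⟩
  · rintro ⟨i, hi⟩
    exact ⟨i - k, by rw [hi]; congr 2 <;> ring⟩

lemma isCyc_rotate {p : ℕ} [NeZero p] {z : ZMod p → V} (h : IsCyc G p z) (k : ZMod p) :
    IsCyc G p (fun m => z (m + k)) := by
  obtain ⟨hp, hinj, hadj⟩ := h
  refine ⟨hp, fun m m' hmm => ?_, fun m => ?_⟩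
  · have := hinj hmm
    simpa using congrArg (· - k) this
  · show G.Adj (z (m + k)) (z (m + 1 + k))
    have := hadj (m + k)
    rwa [show m + k + 1 = m + 1 + k by ring] at this

lemma cycVec_chordless {p : ℕ} [NeZero p] {z : ZMod p → V} (h : IsCyc G p z)
    (hch : ∀ i j : ZMod p, i ≠ j → G.Adj (z i) (z j) → (j = i + 1 ∨ i = j + 1)) :
    cycVec G p z ∈ Tset G := by
  classical
  obtain ⟨hp, hinj, hadj⟩ := h
  have hlab : IsChordlessCycleLabeling G p z := by
    refine ⟨hp, hinj, fun i j hij => ⟨hch i j hij, ?_⟩⟩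
    rintro (rfl | rfl)
    · exact hadj i
    · exact (hadj j).symm
  refine ⟨Set.range z, ⟨p, z, hlab, rfl⟩, ?_⟩
  funext e
  unfold chordVec cycVec
  congr 1
  simp only [eq_iff_iff]
  constructor
  case mpr =>
    rintro ⟨i, hi⟩ x hx
    rw [hi] at hx
    rcases Sym2.mem_iff.1 hx with h | h
    · exact ⟨i, h.symm⟩
    · exact ⟨i + 1, h.symm⟩
  case mp =>
    intro hall
    obtain ⟨e', he'⟩ := e
    induction e' with
    | h x y =>
      have hx : x ∈ Set.range z := hall x (Sym2.mem_mk_left x y)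
      have hy : y ∈ Set.range z := hall y (Sym2.mem_mk_right x y)
      obtain ⟨i, rfl⟩ := hx
      obtain ⟨j, rfl⟩ := hy
      have hadj' : G.Adj (z i) (z j) := he'
      have hij : i ≠ j := fun h => G.irrefl (h ▸ hadj')
      rcases hch i j hij hadj' with rfl | rfl
      · exact ⟨i, rfl⟩
      · exact ⟨j, Sym2.eq_swap⟩
end Span
section Split
variable {V : Type*} [Fintype V] [DecidableEq V] (G : SimpleGraph V) [DecidableRel G.Adj]

lemma mod_inj_aux {p x y : ℕ} (hx1 : 0 < x) (hx : x ≤ p) (hy1 : 0 < y) (hy : y ≤ p)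
    (h : x % p = y % p) : x = y := by
  rcases eq_or_lt_of_le hx with rfl | hx'
  · rw [Nat.mod_self] at h
    rcases eq_or_lt_of_le hy with rfl | hy'
    · rfl
    · rw [Nat.mod_eq_of_lt hy'] at h; omega
  · rw [Nat.mod_eq_of_lt hx'] at h
    rcases eq_or_lt_of_le hy with rfl | hy'
    · rw [Nat.mod_self] at h; omega
    · rw [Nat.mod_eq_of_lt hy'] at h; omega

lemma natCast_val_self {p : ℕ} [NeZero p] (i : ZMod p) : ((i.val : ℕ) : ZMod p) = i :=
  ZMod.val_injective _ (ZMod.val_cast_of_lt i.val_lt)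

lemma cycVec_split {p : ℕ} [NeZero p] {z : ZMod p → V} (h : IsCyc G p z)
    {k : ZMod p} (hk : G.Adj (z 0) (z k)) (hk0 : k ≠ 0) (hk1 : k ≠ 1) (hkm : k ≠ -1) :
    ∃ (p₁ p₂ : ℕ) (z₁ : ZMod p₁ → V) (z₂ : ZMod p₂ → V),
      IsCyc G p₁ z₁ ∧ IsCyc G p₂ z₂ ∧ p₁ < p ∧ p₂ < p ∧
      cycVec G p z = cycVec G p₁ z₁ + cycVec G p₂ z₂ := by
  classical
  obtain ⟨hp, hinj, hadj⟩ := id h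
  set a := k.val with ha
  have hap : a < p := k.val_lt
  have hcast : ((a : ℕ) : ZMod p) = k := natCast_val_self k
  have ha2 : 2 ≤ a := by
    rcases Nat.lt_or_ge a 2 with h' | h'
    · interval_cases a
      · exact absurd (by rw [← hcast]; simp) hk0
      · exact absurd (by rw [← hcast]; simp) hk1
    · exact h'
  have hale : a ≤ p - 2 := by
    rcases Nat.lt_or_ge a (p - 1) with h' | h'
    · omega
    · exfalso
      have hae : a = p - 1 := by omega
      apply hkm
      rw [← hcast, hae]
      have : ((p - 1 : ℕ) : ZMod p) = (p : ℕ) - 1 := by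
        push_cast [Nat.cast_sub (by omega : 1 ≤ p)]
        ring
      rw [this, ZMod.natCast_self, zero_sub]
  set p₁ := a + 1 with hp₁
  set p₂ := p - a + 1 with hp₂
  haveI : NeZero p₁ := ⟨by omega⟩
  haveI : NeZero p₂ := ⟨by omega⟩
  have hp₁2 : 2 ≤ p₁ := by omega
  have hp₂2 : 2 ≤ p₂ := by omega
  set z₁ : ZMod p₁ → V := fun m => z ((m.val : ℕ) : ZMod p) with hz₁
  set z₂ : ZMod p₂ → V := fun m => z (((a + m.val : ℕ)) : ZMod p) with hz₂
  have hv1 : ∀ m : ZMod p₁, m.val ≤ a := fun m => by have := m.val_lt; omega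
  have hv2 : ∀ m : ZMod p₂, m.val ≤ p - a := fun m => by have := m.val_lt; omega
  -- value computations
  have key1 : ∀ m : ZMod p₁,
      (m.val < a ∧ z₁ m = z ((m.val : ℕ) : ZMod p) ∧ z₁ (m+1) = z (((m.val : ℕ) : ZMod p) + 1))
      ∨ (m.val = a ∧ z₁ m = z k ∧ z₁ (m+1) = z 0) := by
    intro m
    rcases Nat.lt_or_ge m.val a with hm | hm
    · left
      refine ⟨hm, rfl, ?_⟩
      show z (((m+1).val : ℕ) : ZMod p) = _
      rw [val_add_one hp₁2 m, Nat.mod_eq_of_lt (by omega), Nat.cast_add, Nat.cast_one]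
    · right
      have hma : m.val = a := le_antisymm (hv1 m) hm
      refine ⟨hma, ?_, ?_⟩
      · show z ((m.val : ℕ) : ZMod p) = z k
        rw [hma, hcast]
      · show z (((m+1).val : ℕ) : ZMod p) = z 0
        rw [val_add_one hp₁2 m, hma, show (a + 1) % p₁ = 0 by rw [hp₁, Nat.mod_self],
          Nat.cast_zero]
  have key2 : ∀ m : ZMod p₂,
      (m.val < p - a ∧ z₂ m = z (((a + m.val : ℕ)) : ZMod p)
        ∧ z₂ (m+1) = z ((((a + m.val : ℕ)) : ZMod p) + 1))
      ∨ (m.val = p - a ∧ z₂ m = z 0 ∧ z₂ (m+1) = z k) := by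
    intro m
    rcases Nat.lt_or_ge m.val (p - a) with hm | hm
    · left
      refine ⟨hm, rfl, ?_⟩
      show z (((a + (m+1).val : ℕ)) : ZMod p) = _
      rw [val_add_one hp₂2 m, Nat.mod_eq_of_lt (by omega)]
      rw [show a + (m.val + 1) = (a + m.val) + 1 by ring, Nat.cast_add, Nat.cast_one]
    · right
      have hma : m.val = p - a := le_antisymm (hv2 m) hm
      refine ⟨hma, ?_, ?_⟩
      · show z (((a + m.val : ℕ)) : ZMod p) = z 0
        rw [hma, show a + (p - a) = p by omega, ZMod.natCast_self]
      · show z (((a + (m+1).val : ℕ)) : ZMod p) = z k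
        rw [val_add_one hp₂2 m, hma, show (p - a + 1) % p₂ = 0 by rw [hp₂, Nat.mod_self],
          Nat.add_zero, hcast]
  -- the two sub cycles
  have hc1 : IsCyc G p₁ z₁ := by
    refine ⟨by omega, ?_, ?_⟩
    · intro m m' hmm
      have : ((m.val : ℕ) : ZMod p) = ((m'.val : ℕ) : ZMod p) := hinj hmm
      have hv := congrArg ZMod.val this
      rw [ZMod.val_natCast, ZMod.val_natCast, Nat.mod_eq_of_lt (by have := hv1 m; omega),
        Nat.mod_eq_of_lt (by have := hv1 m'; omega)] at hv
      exact ZMod.val_injective _ hv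
    · intro m
      rcases key1 m with ⟨-, h1, h2⟩ | ⟨-, h1, h2⟩
      · rw [h1, h2]; exact hadj _
      · rw [h1, h2]; exact hk.symm
  have hc2 : IsCyc G p₂ z₂ := by
    refine ⟨by omega, ?_, ?_⟩
    · intro m m' hmm
      have : (((a + m.val : ℕ)) : ZMod p) = (((a + m'.val : ℕ)) : ZMod p) := hinj hmm
      have hv := congrArg ZMod.val this
      rw [ZMod.val_natCast, ZMod.val_natCast] at hv
      have := mod_inj_aux (by omega) (by have := hv2 m; omega) (by omega)
        (by have := hv2 m'; omega) hv
      have : m.val = m'.val := by omega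
      exact ZMod.val_injective _ this
    · intro m
      rcases key2 m with ⟨-, h1, h2⟩ | ⟨-, h1, h2⟩
      · rw [h1, h2]; exact hadj _
      · rw [h1, h2]; exact hk
  refine ⟨p₁, p₂, z₁, z₂, hc1, hc2, by omega, by omega, ?_⟩
  -- the chord is not a cycle edge
  have echord_ne : ∀ i : ZMod p, s(z 0, z k) ≠ s(z i, z (i+1)) := by
    intro i he
    rcases Sym2.eq_iff.1 he with ⟨h1, h2⟩ | ⟨h1, h2⟩
    · have e1 : (0 : ZMod p) = i := hinj h1
      have e2 : k = i + 1 := hinj h2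
      rw [← e1, zero_add] at e2
      exact hk1 e2
    · have e1 : (0 : ZMod p) = i + 1 := hinj h1
      have e2 : k = i := hinj h2
      exact hkm (by rw [e2]; exact eq_neg_of_add_eq_zero_left e1.symm)
  -- arc descriptions
  set Arc1 : G.edgeSet → Prop :=
    fun e => ∃ i : ZMod p, i.val < a ∧ (e : Sym2 V) = s(z i, z (i+1)) with hArc1
  set Arc2 : G.edgeSet → Prop :=
    fun e => ∃ i : ZMod p, a ≤ i.val ∧ (e : Sym2 V) = s(z i, z (i+1)) with hArc2
  have hA1 : ∀ e : G.edgeSet,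
      (∃ m : ZMod p₁, (e : Sym2 V) = s(z₁ m, z₁ (m+1))) ↔ (Arc1 e ∨ (e : Sym2 V) = s(z k, z 0)) := by
    intro e
    constructor
    · rintro ⟨m, hm⟩
      rcases key1 m with ⟨hlt, h1, h2⟩ | ⟨-, h1, h2⟩
      · left
        refine ⟨((m.val : ℕ) : ZMod p), ?_, ?_⟩
        · rw [ZMod.val_natCast, Nat.mod_eq_of_lt (by omega)]; exact hlt
        · rw [hm, h1, h2]
      · right; rw [hm, h1, h2]
    · rintro (⟨i, hia, hie⟩ | hch)
      · refine ⟨((i.val : ℕ) : ZMod p₁), ?_⟩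
        have hmv : ((i.val : ℕ) : ZMod p₁).val = i.val := by
          rw [ZMod.val_natCast, Nat.mod_eq_of_lt (by omega)]
        rcases key1 ((i.val : ℕ) : ZMod p₁) with ⟨-, h1, h2⟩ | ⟨hma, -, -⟩
        · rw [h1, h2, hmv, natCast_val_self i, hie]
        · rw [hmv] at hma; omega
      · refine ⟨((a : ℕ) : ZMod p₁), ?_⟩
        have hmv : ((a : ℕ) : ZMod p₁).val = a := by
          rw [ZMod.val_natCast, Nat.mod_eq_of_lt (by omega)]
        rcases key1 ((a : ℕ) : ZMod p₁) with ⟨hlt, -, -⟩ | ⟨-, h1, h2⟩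
        · rw [hmv] at hlt; omega
        · rw [h1, h2, hch]
  have hA2 : ∀ e : G.edgeSet,
      (∃ m : ZMod p₂, (e : Sym2 V) = s(z₂ m, z₂ (m+1))) ↔ (Arc2 e ∨ (e : Sym2 V) = s(z 0, z k)) := by
    intro e
    constructor
    · rintro ⟨m, hm⟩
      rcases key2 m with ⟨hlt, h1, h2⟩ | ⟨-, h1, h2⟩
      · left
        refine ⟨(((a + m.val : ℕ)) : ZMod p), ?_, ?_⟩
        · rw [ZMod.val_natCast, Nat.mod_eq_of_lt (by omega)]; omega
        · rw [hm, h1, h2]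
      · right; rw [hm, h1, h2]
    · rintro (⟨i, hia, hie⟩ | hch)
      · refine ⟨(((i.val - a : ℕ)) : ZMod p₂), ?_⟩
        have hmv : (((i.val - a : ℕ)) : ZMod p₂).val = i.val - a := by
          rw [ZMod.val_natCast, Nat.mod_eq_of_lt (by have := i.val_lt; omega)]
        rcases key2 (((i.val - a : ℕ)) : ZMod p₂) with ⟨-, h1, h2⟩ | ⟨hma, -, -⟩
        · rw [h1, h2, hmv, show a + (i.val - a) = i.val by omega, natCast_val_self i, hie]
        · rw [hmv] at hma; have := i.val_lt; omega
      · refine ⟨(((p - a : ℕ)) : ZMod p₂), ?_⟩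
        have hmv : (((p - a : ℕ)) : ZMod p₂).val = p - a := by
          rw [ZMod.val_natCast, Nat.mod_eq_of_lt (by omega)]
        rcases key2 (((p - a : ℕ)) : ZMod p₂) with ⟨hlt, -, -⟩ | ⟨-, h1, h2⟩
        · rw [hmv] at hlt; omega
        · rw [h1, h2, hch]
  have hdisj : ∀ e : G.edgeSet, Arc1 e → Arc2 e → False := by
    rintro e ⟨i, hia, hie⟩ ⟨j, hja, hje⟩
    have hij : i = j := by
      by_contra hne
      exact cycEdge_inj G h hne (by rw [← hie, hje])
    rw [hij] at hia
    omega
  funext e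
  rw [Pi.add_apply]
  unfold cycVec
  by_cases hce : (e : Sym2 V) = s(z 0, z k)
  · have hnA : ¬ ∃ i : ZMod p, (e : Sym2 V) = s(z i, z (i+1)) := by
      rintro ⟨i, hi⟩; rw [hce] at hi; exact echord_ne i hi
    rw [if_neg hnA, if_pos ((hA1 e).2 (Or.inr (by rw [hce]; exact Sym2.eq_swap))),
      if_pos ((hA2 e).2 (Or.inr hce))]
    decide
  · by_cases h1 : Arc1 e
    · have hA : ∃ i : ZMod p, (e : Sym2 V) = s(z i, z (i+1)) := by
        obtain ⟨i, -, hi⟩ := h1; exact ⟨i, hi⟩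
      have hn2 : ¬ ∃ m : ZMod p₂, (e : Sym2 V) = s(z₂ m, z₂ (m+1)) := by
        intro hm
        rcases (hA2 e).1 hm with h2 | h2
        · exact hdisj e h1 h2
        · exact hce h2
      rw [if_pos hA, if_pos ((hA1 e).2 (Or.inl h1)), if_neg hn2]
      decide
    · by_cases h2 : Arc2 e
      · have hA : ∃ i : ZMod p, (e : Sym2 V) = s(z i, z (i+1)) := by
          obtain ⟨i, -, hi⟩ := h2; exact ⟨i, hi⟩
        have hn1 : ¬ ∃ m : ZMod p₁, (e : Sym2 V) = s(z₁ m, z₁ (m+1)) := by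
          intro hm
          rcases (hA1 e).1 hm with h1' | h1'
          · exact hdisj e h1' h2
          · exact hce (by rw [h1']; exact Sym2.eq_swap)
        rw [if_neg hn1, if_pos hA, if_pos ((hA2 e).2 (Or.inl h2))]
        decide
      · have hnA : ¬ ∃ i : ZMod p, (e : Sym2 V) = s(z i, z (i+1)) := by
          rintro ⟨i, hi⟩
          rcases Nat.lt_or_ge i.val a with hia | hia
          · exact h1 ⟨i, hia, hi⟩
          · exact h2 ⟨i, hia, hi⟩
        have hn1 : ¬ ∃ m : ZMod p₁, (e : Sym2 V) = s(z₁ m, z₁ (m+1)) := by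
          intro hm
          rcases (hA1 e).1 hm with h1' | h1'
          · exact h1 h1'
          · exact hce (by rw [h1']; exact Sym2.eq_swap)
        have hn2 : ¬ ∃ m : ZMod p₂, (e : Sym2 V) = s(z₂ m, z₂ (m+1)) := by
          intro hm
          rcases (hA2 e).1 hm with h2' | h2'
          · exact h2 h2'
          · exact hce h2'
        rw [if_neg hnA, if_neg hn1, if_neg hn2]
        decide
end Split
section ClaimAB
variable {V : Type*} [Fintype V] [DecidableEq V] (G : SimpleGraph V) [DecidableRel G.Adj]

lemma cycVec_mem_span (p : ℕ) (z : ZMod p → V) (hz : IsCyc G p z) :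
    cycVec G p z ∈ Submodule.span (ZMod 2) (Tset G) := by
  induction p using Nat.strong_induction_on with
  | _ p ih =>
    haveI : NeZero p := ⟨by have := hz.1; omega⟩
    by_cases hch : ∀ i j : ZMod p, i ≠ j → G.Adj (z i) (z j) → (j = i + 1 ∨ i = j + 1)
    · exact Submodule.subset_span (cycVec_chordless G hz hch)
    · push_neg at hch
      obtain ⟨i, j, hij, hadj, hnot1, hnot2⟩ := hch
      set z' : ZMod p → V := fun m => z (m + i) with hzdef
      have hz' : IsCyc G p z' := isCyc_rotate G hz i
      have hchord : G.Adj (z' 0) (z' (j - i)) := by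
        show G.Adj (z (0 + i)) (z (j - i + i))
        rw [zero_add, sub_add_cancel]
        exact hadj
      have h0 : j - i ≠ 0 := fun h => hij (sub_eq_zero.1 h).symm
      have h1 : j - i ≠ 1 := fun h => hnot1 (by rw [← sub_add_cancel j i, h]; exact add_comm 1 i)
      have hm : j - i ≠ -1 := fun h => hnot2 (by
        have : j + 1 = i := by
          have := congrArg (· + i) h
          simpa [sub_add_cancel] using by
            have h2 : j - i + i = -1 + i := by rw [h]
            rw [sub_add_cancel] at h2
            linear_combination h2
        exact this.symm)
      obtain ⟨p₁, p₂, z₁, z₂, hc1, hc2, hlt1, hlt2, heq⟩ :=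
        cycVec_split G hz' hchord h0 h1 hm
      rw [← cycVec_rotate G z i, heq]
      exact Submodule.add_mem _ (ih p₁ hlt1 z₁ hc1) (ih p₂ hlt2 z₂ hc2)

lemma ker_bd_le_span : LinearMap.ker (bd G) ≤ Submodule.span (ZMod 2) (Tset G) := by
  classical
  suffices h : ∀ (n : ℕ) (f : G.edgeSet → ZMod 2), f ∈ LinearMap.ker (bd G) →
      (Finset.univ.filter (fun e => f e ≠ 0)).card = n →
      f ∈ Submodule.span (ZMod 2) (Tset G) by
    intro f hf; exact h _ f hf rfl
  intro n
  induction n using Nat.strong_induction_on with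
  | _ n ih =>
    intro f hf hn
    by_cases h0 : f = 0
    · exact h0 ▸ Submodule.zero_mem _
    · obtain ⟨p, hpne, z, hz, hsupp⟩ := exists_cyc_in_supp G hf h0
      haveI := hpne
      set w := cycVec G p z with hw
      have hwk : w ∈ LinearMap.ker (bd G) := cycVec_mem_ker G hz
      have hws : w ∈ Submodule.span (ZMod 2) (Tset G) := cycVec_mem_span G p z hz
      set e0 : G.edgeSet := ⟨s(z 0, z 1), by have := hz.2.2 0; rwa [zero_add] at this⟩ with he0
      have hwe0 : w e0 = 1 := by
        rw [hw]
        unfold cycVec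
        rw [if_pos ⟨0, by show (e0 : Sym2 V) = s(z 0, z (0+1)); rw [zero_add]⟩]
      have hcycedge : ∀ e : G.edgeSet, w e ≠ 0 → f e ≠ 0 := by
        intro e hwe
        rw [hw] at hwe
        unfold cycVec at hwe
        by_cases hex : ∃ i : ZMod p, (e : Sym2 V) = s(z i, z (i+1))
        · obtain ⟨i, hi⟩ := hex
          have : e = ⟨s(z i, z (i+1)), hz.2.2 i⟩ := Subtype.ext hi
          rw [this]
          exact hsupp i (hz.2.2 i)
        · rw [if_neg hex] at hwe; exact absurd rfl hwe
      have hsub : (Finset.univ.filter (fun e => (f + w) e ≠ 0)) ⊆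
          (Finset.univ.filter (fun e => f e ≠ 0)).erase e0 := by
        intro e he
        rw [Finset.mem_filter] at he
        rcases he with ⟨-, he⟩
        rw [Finset.mem_erase, Finset.mem_filter]
        by_cases hwe : w e = 0
        · refine ⟨?_, Finset.mem_univ e, ?_⟩
          · rintro rfl
            exact one_ne_zero (hwe0.symm.trans hwe)
          · intro hfe; exact he (by rw [Pi.add_apply, hfe, hwe, add_zero])
        · exfalso
          have hwe1 : w e = 1 := zmod2_ne_zero _ hwe
          have hfe1 : f e = 1 := zmod2_ne_zero _ (hcycedge e hwe)
          apply he
          rw [Pi.add_apply, hfe1, hwe1]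
          decide
      have hmem0 : e0 ∈ Finset.univ.filter (fun e => f e ≠ 0) := by
        rw [Finset.mem_filter]
        exact ⟨Finset.mem_univ _, hcycedge e0 (by rw [hwe0]; exact one_ne_zero)⟩
      have hcard : (Finset.univ.filter (fun e => (f + w) e ≠ 0)).card < n := by
        calc (Finset.univ.filter (fun e => (f + w) e ≠ 0)).card
            ≤ ((Finset.univ.filter (fun e => f e ≠ 0)).erase e0).card :=
              Finset.card_le_card hsub
          _ < (Finset.univ.filter (fun e => f e ≠ 0)).card :=
              Finset.card_erase_lt_of_mem hmem0
          _ = n := hn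
      have hmem : f + w ∈ Submodule.span (ZMod 2) (Tset G) :=
        ih _ hcard (f + w) (Submodule.add_mem _ hf hwk) rfl
      have : f = (f + w) + w := by
        funext e
        rw [Pi.add_apply, Pi.add_apply]
        exact (by decide : ∀ a b : ZMod 2, a = a + b + b) _ _
      rw [this]
      exact Submodule.add_mem _ hmem hws
end ClaimAB


/-- Every finite simple graph has at least `|Edg| - |Ver| + |Con|`
chordless cycles. -/
theorem statement17 {V : Type*} [Fintype V] [DecidableEq V]
    (G : SimpleGraph V) [DecidableRel G.Adj] :
    (G.edgeFinset.card : ℤ) - (Fintype.card V : ℤ) + (Nat.card G.ConnectedComponent : ℤ) ≤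
      ((chordlessCycles G).ncard : ℤ) := by
  classical
  have h1 := finrank_ker_bd G
  have h2 : Module.finrank (ZMod 2) (LinearMap.ker (bd G)) ≤ (chordlessCycles G).ncard := by
    letI : Fintype (Tset G) := (Tset G).toFinite.fintype
    calc Module.finrank (ZMod 2) (LinearMap.ker (bd G))
        ≤ Module.finrank (ZMod 2) (Submodule.span (ZMod 2) (Tset G)) :=
          Submodule.finrank_mono (ker_bd_le_span G)
      _ ≤ (Tset G).toFinset.card := finrank_span_le_card _
      _ = (Tset G).ncard := (Set.ncard_eq_toFinset_card' _).symm
      _ ≤ (chordlessCycles G).ncard := Set.ncard_image_le (Set.toFinite _)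
  omega
end

section
/- For every finite simple graph Γ, the sequence 0 → F₂^Con(Γ) → F₂^Ver(Γ) → F₂^Edg(Γ) → F₂^Cyc(Γ) is exact: ρ₁ is injective, the image of ρ₁ equals the kernel of ρ₂, and the image of ρ₂ equals the kernel of ρ₃. -/
/-- `ρ₁ : F₂^Con → F₂^Ver`, `(ρ₁ f) v = f` (component of `v`). -/
def rho1 {V : Type*} (G : SimpleGraph V) (f : G.ConnectedComponent → ZMod 2) : V → ZMod 2 :=
  fun v => f (G.connectedComponentMk v)

/-- `ρ₂ : F₂^Ver → F₂^Edg`, `(ρ₂ f) {u,v} = f u + f v`. -/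
def rho2 {V : Type*} (G : SimpleGraph V) (f : V → ZMod 2) : G.edgeSet → ZMod 2 :=
  fun e => Sym2.lift ⟨fun u v => f u + f v, fun u v => add_comm (f u) (f v)⟩ (e : Sym2 V)

open scoped Classical in
/-- `ρ₃ : F₂^Edg → F₂^Cyc`, `(ρ₃ g) Z = Σ g e` over all edges `e` with both endpoints in `Z`. -/
noncomputable def rho3 {V : Type*} [Fintype V] (G : SimpleGraph V)
    (g : G.edgeSet → ZMod 2) : chordlessCycles G → ZMod 2 :=
  fun S => ∑ e : G.edgeSet, if ∀ v ∈ (e : Sym2 V), v ∈ (S : Set V) then g e else 0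

section Aux

namespace Statement18Aux

open SimpleGraph Walk Finset

variable {V : Type*} {G : SimpleGraph V}

lemma zmod2_add_eq_zero : ∀ {a b : ZMod 2}, a + b = 0 → a = b := by decide

open scoped Classical in
/-- Extend `g` from edges to all of `Sym2 V` by zero. -/
noncomputable def ghat (G : SimpleGraph V) (g : G.edgeSet → ZMod 2) : Sym2 V → ZMod 2 :=
  fun e => if h : e ∈ G.edgeSet then g ⟨e, h⟩ else 0

lemma ghat_mem (g : G.edgeSet → ZMod 2) {e : Sym2 V} (h : e ∈ G.edgeSet) :
    ghat G g e = g ⟨e, h⟩ := by simp [ghat, h]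

/-- Sum of `g` over the edges of a walk. -/
noncomputable def gsum (g : G.edgeSet → ZMod 2) {u v : V} (w : G.Walk u v) : ZMod 2 :=
  (w.edges.map (ghat G g)).sum

@[simp] lemma gsum_nil (g : G.edgeSet → ZMod 2) {u : V} :
    gsum g (Walk.nil : G.Walk u u) = 0 := rfl

lemma gsum_cons (g : G.edgeSet → ZMod 2) {u v w : V} (h : G.Adj u v) (q : G.Walk v w) :
    gsum g (Walk.cons h q) = ghat G g s(u, v) + gsum g q := by
  simp [gsum, Walk.edges_cons]

lemma gsum_append (g : G.edgeSet → ZMod 2) {u v w : V} (p : G.Walk u v) (q : G.Walk v w) :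
    gsum g (p.append q) = gsum g p + gsum g q := by
  simp [gsum, Walk.edges_append]

@[simp] lemma gsum_copy (g : G.edgeSet → ZMod 2) {u v u' v' : V} (p : G.Walk u v)
    (hu : u = u') (hv : v = v') : gsum g (p.copy hu hv) = gsum g p := by
  simp [gsum, Walk.edges_copy]

lemma gsum_concat (g : G.edgeSet → ZMod 2) {u v w : V} (p : G.Walk u v) (h : G.Adj v w) :
    gsum g (p.concat h) = gsum g p + ghat G g s(v, w) := by
  simp [gsum, Walk.edges_concat]

lemma gsum_reverse (g : G.edgeSet → ZMod 2) {u v : V} (p : G.Walk u v) :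
    gsum g p.reverse = gsum g p := by
  simp [gsum, Walk.edges_reverse, List.sum_reverse]

lemma gsum_rotate [DecidableEq V] (g : G.edgeSet → ZMod 2) {u v : V} (c : G.Walk v v) (h : u ∈ c.support) :
    gsum g (c.rotate u h) = gsum g c :=
  List.Perm.sum_eq (((Walk.rotate_edges c u h).perm).map (ghat G g))

/-- Take the first `k` steps of a walk. -/
def wtake {u v : V} : (w : G.Walk u v) → (k : ℕ) → G.Walk u (w.getVert k)
  | Walk.nil, _ => Walk.nil
  | Walk.cons _ _, 0 => Walk.nil
  | Walk.cons h q, (k + 1) => Walk.cons h (wtake q k)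

/-- Drop the first `k` steps of a walk. -/
def wdrop {u v : V} : (w : G.Walk u v) → (k : ℕ) → G.Walk (w.getVert k) v
  | Walk.nil, _ => Walk.nil
  | Walk.cons h q, 0 => Walk.cons h q
  | Walk.cons _ q, (k + 1) => wdrop q k

lemma gsum_take_drop (g : G.edgeSet → ZMod 2) {u v : V} (w : G.Walk u v) (k : ℕ) :
    gsum g w = gsum g (wtake w k) + gsum g (wdrop w k) := by
  induction w generalizing k with
  | nil => cases k <;> simp [wtake, wdrop]
  | cons h q ih =>
    cases k with
    | zero => exact (zero_add _).symm
    | succ k =>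
      simp only [wtake, wdrop, gsum_cons, add_assoc]
      rw [ih k]
      rw [← add_assoc]; exact congrArg (· + gsum g (wdrop q k)) (gsum_cons g h (wtake q k)).symm

lemma length_wtake {u v : V} (w : G.Walk u v) (k : ℕ) :
    (wtake w k).length = min k w.length := by
  induction w generalizing k with
  | nil => cases k <;> simp [wtake]
  | cons h q ih =>
    cases k with
    | zero => rfl
    | succ k => simp [wtake, ih, Nat.succ_min_succ]

lemma length_wdrop {u v : V} (w : G.Walk u v) (k : ℕ) :
    (wdrop w k).length = w.length - k := by
  induction w generalizing k with
  | nil => cases k <;> simp [wdrop]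
  | cons h q ih =>
    cases k with
    | zero => rfl
    | succ k => simpa [wdrop] using ih k

lemma getVert_wdrop {u v : V} (w : G.Walk u v) (k m : ℕ) :
    (wdrop w k).getVert m = w.getVert (k + m) := by
  induction w generalizing k with
  | nil => cases k <;> simp [wdrop, Walk.getVert]
  | cons h q ih =>
    cases k with
    | zero => rw [Nat.zero_add]; rfl
    | succ k =>
      have hh : k + 1 + m = (k + m) + 1 := by omega
      rw [hh]
      exact ih k

lemma getVert_eq_support_getElem {u v : V} (w : G.Walk u v) {k : ℕ}
    (hk : k < w.support.length) : w.getVert k = w.support[k] := by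
  induction w generalizing k with
  | nil =>
    simp only [Walk.support_nil, List.length_singleton] at hk
    interval_cases k
    simp [Walk.getVert]
  | cons h q ih =>
    cases k with
    | zero => simp
    | succ k =>
      simp only [Walk.support_cons, List.length_cons, Nat.succ_lt_succ_iff] at hk ⊢
      show q.getVert k = _
      rw [List.getElem_cons_succ]
      exact ih hk

lemma gsum_eq_sum_range (g : G.edgeSet → ZMod 2) {u v : V} (w : G.Walk u v) :
    gsum g w = ∑ k ∈ Finset.range w.length, ghat G g s(w.getVert k, w.getVert (k + 1)) := by
  induction w with
  | nil => simp
  | cons h q ih =>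
    rw [gsum_cons, ih]
    rw [Walk.length_cons, Finset.sum_range_succ']
    rw [add_comm]
    congr 1
    show ghat G g s(_, _) = ghat G g s(_, q.getVert 0)
    simp


lemma tail_length {u v : V} (c : G.Walk u v) : c.support.tail.length = c.length := by
  have := Walk.length_support c
  cases hs : c.support with
  | nil => exact absurd hs (Walk.support_ne_nil c)
  | cons a l => rw [hs] at this; simp at this ⊢; omega

lemma tail_getElem {u : V} {c : G.Walk u u} {k : ℕ} (hk : k < c.length) :
    c.support.tail[k]'(by rw [tail_length]; exact hk) = c.getVert (k + 1) := by
  rw [List.getElem_tail]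
  exact (getVert_eq_support_getElem c (by rw [Walk.length_support]; omega)).symm

lemma getVert_inj {u : V} (c : G.Walk u u) (hnd : c.support.tail.Nodup)
    {a b : ℕ} (ha : a < c.length) (hb : b < c.length) (h : c.getVert a = c.getVert b) :
    a = b := by
  have key : ∀ x y : ℕ, x < c.length → y < c.length → c.getVert x = c.getVert y →
      x = 0 → 0 < y → False := by
    intro x y hx hy hxy hx0 hy0
    subst hx0
    have h1 : c.support.tail[y - 1]'(by rw [tail_length]; omega) = c.getVert y := by
      rw [tail_getElem (by omega : y - 1 < c.length)]
      congr 1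
      omega
    have h2 : c.support.tail[c.length - 1]'(by rw [tail_length]; omega) =
        c.getVert c.length := by
      rw [tail_getElem (by omega : c.length - 1 < c.length)]
      congr 1
      omega
    have h3 : c.getVert y = c.getVert c.length :=
      hxy.symm.trans ((Walk.getVert_zero c).trans (Walk.getVert_length c).symm)
    have h4 := hnd.getElem_inj_iff.mp (h1.trans (h3.trans h2.symm))
    omega
  rcases Nat.eq_zero_or_pos a with rfl | hapos
  · rcases Nat.eq_zero_or_pos b with rfl | hbpos
    · rfl
    · exact absurd (key 0 b ha hb h rfl hbpos) not_false
  · rcases Nat.eq_zero_or_pos b with rfl | hbpos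
    · exact absurd (key 0 a hb ha h.symm rfl hapos) not_false
    · have h1 : c.support.tail[a - 1]'(by rw [tail_length]; omega) =
          c.support.tail[b - 1]'(by rw [tail_length]; omega) := by
        rw [tail_getElem (by omega : a - 1 < c.length),
          tail_getElem (by omega : b - 1 < c.length)]
        have e1 : a - 1 + 1 = a := by omega
        have e2 : b - 1 + 1 = b := by omega
        rw [e1, e2, h]
      have := (hnd.getElem_inj_iff).mp h1
      omega

lemma labeling_adj_succ {p : ℕ} {z : ZMod p → V} (lab : IsChordlessCycleLabeling G p z)
    (i : ZMod p) : G.Adj (z i) (z (i + 1)) := by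
  obtain ⟨hp, hinj, hadj⟩ := lab
  haveI : Fact (1 < p) := ⟨by omega⟩
  have h1 : i ≠ i + 1 := by
    intro h
    exact one_ne_zero (left_eq_add.mp h)
  exact (hadj i (i + 1) h1).2 (Or.inl rfl)

lemma two_ne_zero_zmod {p : ℕ} (hp : 3 ≤ p) : (2 : ZMod p) ≠ 0 := by
  intro h
  have h2 : ((2 : ℕ) : ZMod p) = 0 := by exact_mod_cast h
  have := (ZMod.natCast_eq_zero_iff 2 p).mp h2
  have := Nat.le_of_dvd (by norm_num) this
  omega

lemma sum_zmod_shift {p : ℕ} [NeZero p] (F : ZMod p → ZMod 2) :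
    ∑ i : ZMod p, F (i + 1) = ∑ i : ZMod p, F i :=
  Fintype.sum_equiv (Equiv.addRight 1) _ _ (fun _ => rfl)

lemma natCast_zmod_bijective {n : ℕ} [NeZero n] :
    Function.Bijective (fun k : Fin n => ((k : ℕ) : ZMod n)) := by
  rw [Fintype.bijective_iff_injective_and_card]
  constructor
  · intro a b hab
    have := congrArg ZMod.val hab
    rw [ZMod.val_cast_of_lt a.isLt, ZMod.val_cast_of_lt b.isLt] at this
    exact Fin.ext this
  · simp [ZMod.card]

lemma sum_range_zmod {n : ℕ} [NeZero n] (F : ZMod n → ZMod 2) :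
    ∑ i : ZMod n, F i = ∑ k ∈ Finset.range n, F (k : ZMod n) := by
  rw [← Fin.sum_univ_eq_sum_range]
  exact (Fintype.sum_bijective _ natCast_zmod_bijective
    (fun k : Fin n => F ((k : ℕ) : ZMod n)) F (fun _ => rfl)).symm

open scoped Classical in
lemma rho3_labeling [Fintype V] {p : ℕ} [NeZero p] {z : ZMod p → V}
    (lab : IsChordlessCycleLabeling G p z) (g : G.edgeSet → ZMod 2)
    (hS : Set.range z ∈ chordlessCycles G) :
    rho3 G g ⟨Set.range z, hS⟩ = ∑ i : ZMod p, ghat G g s(z i, z (i + 1)) := by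
  have hE : ∀ i : ZMod p, s(z i, z (i + 1)) ∈ G.edgeSet := fun i => labeling_adj_succ lab i
  set E : ZMod p → G.edgeSet := fun i => ⟨s(z i, z (i + 1)), hE i⟩ with hEdef
  have hEinj : Function.Injective E := by
    intro i j hij
    have h2 := Subtype.ext_iff.mp hij
    simp only [hEdef, Sym2.eq_iff] at h2
    rcases h2 with ⟨h2, _⟩ | ⟨h2, h3⟩
    · exact lab.2.1 h2
    · have e1 : i = j + 1 := lab.2.1 h2
      have e2 : i + 1 = j := lab.2.1 h3
      have h4 : i = i + 2 := by rw [← e2] at e1; linear_combination e1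
      exact absurd (left_eq_add.mp h4) (two_ne_zero_zmod lab.1)
  have hRange : ∀ (e : Sym2 V), e ∈ G.edgeSet → (∀ v ∈ e, v ∈ Set.range z) →
      ∃ i, (E i : Sym2 V) = e := by
    intro e
    induction e using Sym2.ind with
    | _ x y =>
      intro he hP
      obtain ⟨i, rfl⟩ := hP x (by simp)
      obtain ⟨j, rfl⟩ := hP y (by simp)
      rw [SimpleGraph.mem_edgeSet] at he
      have hij : i ≠ j := fun h => G.ne_of_adj he (by rw [h])
      rcases (lab.2.2 i j hij).1 he with h1 | h1
      · exact ⟨i, by simp only [hEdef]; rw [h1]⟩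
      · exact ⟨j, by simp only [hEdef]; rw [h1]; exact Sym2.eq_swap⟩
  have hzero : ∀ e ∈ Finset.univ, e ∉ Finset.univ.image E →
      (if ∀ v ∈ (e : Sym2 V), v ∈ Set.range z then g e else 0) = 0 := by
    intro e _ hne
    rw [if_neg]
    intro hP
    obtain ⟨i, hi⟩ := hRange (e : Sym2 V) e.prop hP
    exact hne (Finset.mem_image.mpr ⟨i, Finset.mem_univ _, Subtype.ext hi⟩)
  calc rho3 G g ⟨Set.range z, hS⟩
      = ∑ e : G.edgeSet, if ∀ v ∈ (e : Sym2 V), v ∈ Set.range z then g e else 0 := by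
        unfold rho3
        refine Finset.sum_congr rfl fun e _ => ?_
        congr 1
    _ = ∑ e ∈ Finset.univ.image E, if ∀ v ∈ (e : Sym2 V), v ∈ Set.range z then g e else 0 :=
        (Finset.sum_subset (Finset.subset_univ _) hzero).symm
    _ = ∑ i : ZMod p, if ∀ v ∈ (E i : Sym2 V), v ∈ Set.range z then g (E i) else 0 :=
        Finset.sum_image (fun x _ y _ hxy => hEinj hxy)
    _ = ∑ i : ZMod p, ghat G g s(z i, z (i + 1)) := by
        apply Finset.sum_congr rfl
        intro i _
        rw [if_pos, ghat_mem g (hE i)]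
        intro v hv
        rcases Sym2.mem_iff.mp hv with rfl | rfl
        exacts [⟨i, rfl⟩, ⟨i + 1, rfl⟩]


lemma rho2_apply (f : V → ZMod 2) {x y : V} (he : G.Adj x y) :
    rho2 G f ⟨s(x, y), he⟩ = f x + f y := by
  simp [rho2]

lemma edge_funext {h1 h2 : G.edgeSet → ZMod 2}
    (H : ∀ (x y : V) (he : G.Adj x y), h1 ⟨s(x, y), he⟩ = h2 ⟨s(x, y), he⟩) : h1 = h2 := by
  funext e
  obtain ⟨e, he⟩ := e
  revert he
  induction e using Sym2.ind with
  | _ x y => intro he; exact H x y he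

lemma chord_split [DecidableEq V] (g : G.edgeSet → ZMod 2) {u : V} {n a b : ℕ}
    (c : G.Walk u u) (hc : c.length = n)
    (hadj : G.Adj (c.getVert a) (c.getVert b))
    (hab : a < b) (hbn : b < n) (h1 : b - a + 1 < n) (h2 : a + (n - b) + 1 < n)
    (IH : ∀ m, m < n → ∀ ⦃x : V⦄ (w : G.Walk x x), w.length = m → gsum g w = 0) :
    gsum g c = 0 := by
  set t := wtake c a with ht
  set d := wdrop c a with hd
  have hmid : d.getVert (b - a) = c.getVert b := by
    rw [hd, getVert_wdrop]; congr 1; omega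
  set mid := wtake d (b - a) with hm
  set rest := wdrop d (b - a) with hrst
  have hlen_d : d.length = n - a := by rw [hd, length_wdrop, hc]
  have hlen_t : t.length = a := by rw [ht, length_wtake, hc]; omega
  have hlen_mid : mid.length = b - a := by rw [hm, length_wtake, hlen_d]; omega
  have hlen_rest : rest.length = n - b := by rw [hrst, length_wdrop, hlen_d]; omega
  have e1 : gsum g ((mid.copy rfl hmid).concat hadj.symm) = 0 := by
    apply IH (b - a + 1) h1
    rw [Walk.length_concat, Walk.length_copy, hlen_mid]
  have e2 : gsum g (t.append (Walk.cons hadj (rest.copy hmid rfl))) = 0 := by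
    apply IH (a + (n - b) + 1) h2
    rw [Walk.length_append, Walk.length_cons, Walk.length_copy, hlen_t, hlen_rest]
    omega
  rw [gsum_concat, gsum_copy] at e1
  rw [gsum_append, gsum_cons, gsum_copy] at e2
  have hswap : ghat G g s(c.getVert b, c.getVert a) = ghat G g s(c.getVert a, c.getVert b) := by
    rw [Sym2.eq_swap]
  rw [hswap] at e1
  have q1 := zmod2_add_eq_zero e1
  have hsplit : gsum g c = gsum g t + (gsum g mid + gsum g rest) := by
    rw [gsum_take_drop g c a, ← ht, ← hd, gsum_take_drop g d (b - a), ← hm, ← hrst]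
  rw [hsplit, q1]
  exact e2

lemma nodup_case [Fintype V] [DecidableEq V] (g : G.edgeSet → ZMod 2)
    (H : ∀ (p : ℕ) [NeZero p] (z : ZMod p → V), IsChordlessCycleLabeling G p z →
      ∑ i : ZMod p, ghat G g s(z i, z (i + 1)) = 0)
    {n : ℕ} (hn : 3 ≤ n) {u : V} (c : G.Walk u u) (hc : c.length = n)
    (hnd : c.support.tail.Nodup)
    (IH : ∀ m, m < n → ∀ ⦃x : V⦄ (w : G.Walk x x), w.length = m → gsum g w = 0) :
    gsum g c = 0 := by
  haveI : NeZero n := ⟨by omega⟩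
  haveI : Fact (1 < n) := ⟨by omega⟩
  set z : ZMod n → V := fun i => c.getVert i.val with hz
  have hzi : ∀ i : ZMod n, z i = c.getVert i.val := fun i => rfl
  have hzinj : Function.Injective z := by
    intro i j hij
    have := getVert_inj c hnd (by rw [hc]; exact ZMod.val_lt i)
      (by rw [hc]; exact ZMod.val_lt j) hij
    exact ZMod.val_injective n this
  have hcast : ∀ k : ℕ, k < n → z (k : ZMod n) = c.getVert k := by
    intro k hk; rw [hzi, ZMod.val_cast_of_lt hk]
  have hsucc : ∀ i : ZMod n, z (i + 1) = c.getVert (i.val + 1) := by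
    intro i
    have hv : (i + 1).val = (i.val + 1) % n := by
      rw [ZMod.val_add, ZMod.val_one]
    by_cases hend : i.val + 1 = n
    · rw [hzi, hv, hend, Nat.mod_self, Walk.getVert_zero, ← hc, Walk.getVert_length]
    · rw [hzi, hv, Nat.mod_eq_of_lt (by have := ZMod.val_lt i; omega)]
  have hcons : ∀ i : ZMod n, G.Adj (z i) (z (i + 1)) := by
    intro i
    rw [hsucc i, hzi]
    exact c.adj_getVert_succ (by rw [hc]; exact ZMod.val_lt i)
  by_cases hch : ∀ i j : ZMod n, i ≠ j → G.Adj (z i) (z j) → (j = i + 1 ∨ i = j + 1)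
  · have lab : IsChordlessCycleLabeling G n z := by
      refine ⟨hn, hzinj, fun i j hij => ⟨hch i j hij, ?_⟩⟩
      rintro (rfl | rfl)
      · exact hcons i
      · exact (hcons j).symm
    have hsum := H n z lab
    rw [gsum_eq_sum_range, hc]
    rw [sum_range_zmod (fun i => ghat G g s(z i, z (i + 1)))] at hsum
    rw [← hsum]
    apply Finset.sum_congr rfl
    intro k hk
    rw [Finset.mem_range] at hk
    rw [hcast k hk, hsucc (k : ZMod n), ZMod.val_cast_of_lt hk]
  · push_neg at hch
    obtain ⟨i, j, hij, hadj, hne1, hne2⟩ := hch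
    have key : ∀ i' j' : ZMod n, G.Adj (z i') (z j') → j' ≠ i' + 1 → i' ≠ j' + 1 →
        i'.val < j'.val → gsum g c = 0 := by
      intro i' j' hadj' hne1' hne2' hlt
      have hic : ((i'.val : ℕ) : ZMod n) = i' := ZMod.natCast_rightInverse i'
      have hjc : ((j'.val : ℕ) : ZMod n) = j' := ZMod.natCast_rightInverse j'
      have hbn : j'.val < n := ZMod.val_lt j'
      have hb1 : j'.val ≠ i'.val + 1 := by
        intro hb
        apply hne1'
        rw [← hjc, hb, Nat.cast_add, Nat.cast_one, hic]
      have hcorner : ¬(i'.val = 0 ∧ j'.val = n - 1) := by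
        rintro ⟨h0, hn1⟩
        apply hne2'
        rw [← hic, ← hjc, h0, hn1, Nat.cast_zero]
        have hcastn : ((n - 1 : ℕ) : ZMod n) + 1 = ((n : ℕ) : ZMod n) := by
          calc ((n - 1 : ℕ) : ZMod n) + 1 = (((n - 1) + 1 : ℕ) : ZMod n) := by push_cast; ring
            _ = ((n : ℕ) : ZMod n) := by congr 1; omega
        rw [hcastn, ZMod.natCast_self]
      have hsplit1 : j'.val - i'.val + 1 < n := by
        rcases Nat.eq_zero_or_pos i'.val with h0 | h0
        · have : j'.val ≠ n - 1 := fun hh => hcorner ⟨h0, hh⟩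
          omega
        · omega
      have hsplit2 : i'.val + (n - j'.val) + 1 < n := by omega
      have hadj2 : G.Adj (c.getVert i'.val) (c.getVert j'.val) := hadj'
      exact chord_split g c hc hadj2 hlt hbn hsplit1 hsplit2 IH
    rcases lt_trichotomy i.val j.val with hlt | heq | hgt
    · exact key i j hadj hne1 hne2 hlt
    · exact absurd (ZMod.val_injective n heq) hij
    · exact key j i hadj.symm hne2 hne1 hgt

lemma gsum_closed [Fintype V] [DecidableEq V] (g : G.edgeSet → ZMod 2)
    (H : ∀ (p : ℕ) [NeZero p] (z : ZMod p → V), IsChordlessCycleLabeling G p z →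
      ∑ i : ZMod p, ghat G g s(z i, z (i + 1)) = 0) :
    ∀ (n : ℕ) ⦃u : V⦄ (c : G.Walk u u), c.length = n → gsum g c = 0 := by
  intro n
  induction n using Nat.strong_induction_on with
  | _ n IH =>
    intro u c hc
    rcases Nat.eq_zero_or_pos n with rfl | hpos
    · rw [Walk.nil_iff_eq_nil.mp (Walk.length_eq_zero_iff.mp hc)]; simp
    by_cases hnd : c.support.tail.Nodup
    · rcases (by omega : n = 1 ∨ n = 2 ∨ 3 ≤ n) with rfl | rfl | hn3
      · exfalso
        have h01 := c.adj_getVert_succ (i := 0) (by omega)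
        rw [Walk.getVert_zero] at h01
        have hgl : c.getVert (0 + 1) = u := by
          rw [show (0 + 1 : ℕ) = c.length from hc.symm, Walk.getVert_length]
        rw [hgl] at h01
        exact G.irrefl h01
      · rw [gsum_eq_sum_range, hc, Finset.sum_range_succ, Finset.sum_range_one]
        have hg2 : c.getVert (1 + 1) = u := by
          rw [show (1 + 1 : ℕ) = c.length from hc.symm, Walk.getVert_length]
        rw [Walk.getVert_zero, hg2]
        rw [show s(u, c.getVert 1) = s(c.getVert 1, u) from Sym2.eq_swap]
        exact CharTwo.add_self_eq_zero _
      · exact nodup_case g H hn3 c hc hnd (fun m hm x w hw => IH m hm w hw)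
    · obtain ⟨x, hdup⟩ := List.exists_duplicate_iff_not_nodup.mpr hnd
      have hcount : 2 ≤ c.support.tail.count x := List.duplicate_iff_two_le_count.mp hdup
      have hx : x ∈ c.support := List.mem_of_mem_tail hdup.mem
      have hrot_len : (c.rotate x hx).length = n := by
        have h' : (c.rotate x hx).edges.length = c.edges.length :=
          (Walk.rotate_edges c x hx).perm.length_eq
        rw [Walk.length_edges, Walk.length_edges] at h'
        rw [h', hc]
      have hrot_count : 2 ≤ (c.rotate x hx).support.tail.count x := by
        have hperm := (Walk.support_rotate c x hx).perm
        rw [hperm.count_eq]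
        exact hcount
      rw [(gsum_rotate g c hx).symm]
      have hnotnil : ¬ (c.rotate x hx).Nil := by
        rw [Walk.nil_iff_length_eq, hrot_len]; omega
      obtain ⟨v, hadj, q, hq⟩ := Walk.not_nil_iff.mp hnotnil
      have hxq : x ∈ q.support := by
        rw [hq, Walk.support_cons, List.tail_cons] at hrot_count
        by_contra hmem
        rw [List.count_eq_zero_of_not_mem hmem] at hrot_count
        omega
      set t := q.takeUntil x hxq with ht
      set d := q.dropUntil x hxq with hd
      have hspec : t.append d = q := Walk.take_spec q hxq
      have hlen : t.length + d.length = q.length := by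
        have := congrArg Walk.length hspec
        rw [Walk.length_append] at this; exact this
      have hqlen : q.length + 1 = n := by
        have h' := hrot_len
        rw [hq, Walk.length_cons] at h'
        omega
      have hdpos : 0 < d.length := by
        by_contra h0
        push_neg at h0
        have hdnil : d = Walk.nil := Walk.nil_iff_eq_nil.mp (Walk.length_eq_zero_iff.mp (by omega))
        have hq_supp : q.support = t.support ++ d.support.tail := by
          conv_lhs => rw [← hspec]
          rw [Walk.support_append]
        rw [hdnil] at hq_supp
        simp only [Walk.support_nil, List.tail_cons, List.append_nil] at hq_supp
        have hcnt1 : q.support.count x = 1 := by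
          rw [hq_supp]
          exact Walk.count_support_takeUntil_eq_one q hxq
        have hcnt2 : 2 ≤ q.support.count x := by
          rw [hq, Walk.support_cons] at hrot_count
          simpa using hrot_count
        omega
      have e1 : gsum g (Walk.cons hadj t) = 0 :=
        IH (t.length + 1) (by omega) (Walk.cons hadj t) (by rw [Walk.length_cons])
      have e2 : gsum g d = 0 := IH d.length (by omega) d rfl
      have hqsum : gsum g q = gsum g t + gsum g d := by
        conv_lhs => rw [← hspec]
        rw [gsum_append]
      rw [hq, gsum_cons, hqsum, ← add_assoc]
      rw [gsum_cons] at e1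
      rw [e1, zero_add]
      exact e2


end Statement18Aux

open Statement18Aux in
/-- For every finite simple graph `G`, the sequence
`0 → F₂^Con → F₂^Ver → F₂^Edg → F₂^Cyc` is exact: `ρ₁` is injective, `im ρ₁ = ker ρ₂`,
and `im ρ₂ = ker ρ₃`. -/
theorem statement18 {V : Type*} [Fintype V] [DecidableEq V] (G : SimpleGraph V) :
    Function.Injective (rho1 G) ∧
      Set.range (rho1 G) = {f : V → ZMod 2 | rho2 G f = 0} ∧
      Set.range (rho2 G) = {g : G.edgeSet → ZMod 2 | rho3 G g = 0} := by
  refine ⟨?_, ?_, ?_⟩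
  · -- injectivity of rho1
    intro f1 f2 h
    funext cc
    induction cc using SimpleGraph.ConnectedComponent.ind with
    | _ v => exact congrFun h v
  · -- im rho1 = ker rho2
    ext f
    simp only [Set.mem_range, Set.mem_setOf_eq]
    constructor
    · rintro ⟨F, rfl⟩
      apply edge_funext
      intro x y he
      rw [rho2_apply]
      simp only [rho1, Pi.zero_apply]
      rw [SimpleGraph.ConnectedComponent.connectedComponentMk_eq_of_adj he]
      exact CharTwo.add_self_eq_zero _
    · intro h0
      have hconst : ∀ {x y : V}, G.Adj x y → f x = f y := by
        intro x y hxy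
        have hcf := congrFun h0 (⟨s(x, y), hxy⟩ : G.edgeSet)
        rw [rho2_apply] at hcf
        simp only [Pi.zero_apply] at hcf
        exact zmod2_add_eq_zero hcf
      have hwalk : ∀ (v w : V) (p : G.Walk v w), f v = f w := by
        intro v w p
        induction p with
        | nil => rfl
        | cons h q ih => exact (hconst h).trans ih
      exact ⟨SimpleGraph.ConnectedComponent.lift f (fun v w p _ => hwalk v w p), rfl⟩
  · -- im rho2 = ker rho3
    ext g
    simp only [Set.mem_range, Set.mem_setOf_eq]
    constructor
    · rintro ⟨f, rfl⟩
      funext S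
      obtain ⟨S, hS⟩ := S
      obtain ⟨p, z, lab, hrange⟩ := id hS
      subst hrange
      haveI : NeZero p := ⟨by have := lab.1; omega⟩
      rw [rho3_labeling lab (rho2 G f) hS]
      simp only [Pi.zero_apply]
      have hterm : ∀ i : ZMod p, ghat G (rho2 G f) s(z i, z (i + 1)) = f (z i) + f (z (i + 1)) := by
        intro i
        rw [ghat_mem _ (labeling_adj_succ lab i), rho2_apply]
      rw [Finset.sum_congr rfl (fun i _ => hterm i), Finset.sum_add_distrib,
        sum_zmod_shift (fun i => f (z i))]
      exact CharTwo.add_self_eq_zero _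
    · intro hg
      have H : ∀ (p : ℕ) [NeZero p] (z : ZMod p → V), IsChordlessCycleLabeling G p z →
          ∑ i : ZMod p, ghat G g s(z i, z (i + 1)) = 0 := by
        intro p _ z lab
        have hS : Set.range z ∈ chordlessCycles G := ⟨p, z, lab, rfl⟩
        have hzero := congrFun hg (⟨Set.range z, hS⟩ : chordlessCycles G)
        rw [rho3_labeling lab g hS] at hzero
        simpa using hzero
      have hind : ∀ {x y : V} (w1 w2 : G.Walk x y), gsum g w1 = gsum g w2 := by
        intro x y w1 w2
        have h0 := gsum_closed g H (w1.append w2.reverse).length (w1.append w2.reverse) rfl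
        rw [gsum_append, gsum_reverse] at h0
        exact zmod2_add_eq_zero h0
      have hreach : ∀ v : V, G.Reachable ((G.connectedComponentMk v).out) v := by
        intro v
        apply SimpleGraph.ConnectedComponent.exact
        exact Quot.out_eq _
      refine ⟨fun v => gsum g (hreach v).some, ?_⟩
      apply edge_funext
      intro x y he
      rw [rho2_apply]
      have hrxy : (G.connectedComponentMk x).out = (G.connectedComponentMk y).out := by
        rw [SimpleGraph.ConnectedComponent.connectedComponentMk_eq_of_adj he]
      have hfy : gsum g (hreach y).some = gsum g (hreach x).some + ghat G g s(x, y) := by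
        have hw : gsum g (hreach y).some =
            gsum g (((hreach x).some.copy hrxy rfl).append (SimpleGraph.Walk.cons he SimpleGraph.Walk.nil)) := hind _ _
        rw [hw, gsum_append, gsum_copy, gsum_cons, gsum_nil, add_zero]
      rw [hfy, ← add_assoc, CharTwo.add_self_eq_zero, zero_add]
      exact ghat_mem g he

end Aux
end
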